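/- Let N, D ≥ 1, let R > 1, and let W, W_V ∈ ℝ^{D×D} and X, X̃ ∈ ℝ^{N×D} be matrices satisfying ‖W‖ ≤ R, ‖W_V‖ ≤ R, ‖X‖ ≤ R, and ‖X̃‖ ≤ R in spectral norm. Define the self-attention map F(X) = D(X)^{-1} · A(X) · X W_V, where A(X) ∈ ℝ^{N×N} has entries A(X)_{i,j} = exp((X W Xᵀ)_{i,j}) and D(X) ∈ ℝ^{N×N} is the diagonal matrix whose i-th diagonal entry is the i-th row sum Σ_{j=1}^N A(X)_{i,j}. Then for every i ∈ [N] and j ∈ [D], |F(X)_{i,j} − F(X̃)_{i,j}| ≤ 5 R⁴ √(N D) · ‖X − X̃‖. -/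

import Mathlib

noncomputable def specNorm {m n : ℕ} (A : Matrix (Fin m) (Fin n) ℝ) : ℝ :=
  ‖LinearMap.toContinuousLinearMap (Matrix.toEuclideanLin A)‖

/-- Self-attention: `F(X) = D(X)⁻¹ · A(X) · (X · W_V)` with `A(X)ᵢⱼ = exp((X W Xᵀ)ᵢⱼ)`
and `D(X)` the diagonal matrix of row sums of `A(X)`. -/
noncomputable def attn {N D : ℕ} (W WV : Matrix (Fin D) (Fin D) ℝ)
    (X : Matrix (Fin N) (Fin D) ℝ) : Matrix (Fin N) (Fin D) ℝ :=
  (Matrix.diagonal fun i => ∑ j, Real.exp ((X * W * X.transpose) i j))⁻¹ *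
    (Matrix.of fun i j => Real.exp ((X * W * X.transpose) i j)) * (X * WV)

/-
Row `i` of `F(X)` is the softmax of the scores `(X W Xᵀ)ᵢ.` averaging the rows of `X W_V`. With
`ε = ‖X - X̃‖`, every score moves by at most `2R²ε`, every value entry by at most `Rε`, and the
value entries are bounded by `R²`. Softmax is `2`-Lipschitz from `ℓ∞` to `ℓ¹`: with `S, T` the two
normalisers, `e^{a_k} T - e^{b_k} S = ∑ₗ (e^{a_k + b_l} - e^{b_k + a_l})`, and
`|eˣ - eʸ| ≤ |x - y| (eˣ + eʸ) / 2` makes the pairs sum to at most `2δ S T`. Hence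
`|ΔF_{ij}| ≤ 2 · 2R²ε · R² + Rε ≤ 5R⁴ε`, and `√(ND) ≥ 1`.
-/

open scoped Matrix Matrix.Norms.L2Operator
open Real

namespace Matrix

variable {𝕜 : Type*} [RCLike 𝕜] {m n l p : Type*} [Fintype m] [Fintype n] [Fintype l] [Fintype p]

theorem norm_apply_le_l2_opNorm [DecidableEq n] (A : Matrix m n 𝕜) (i : m) (j : n) :
    ‖A i j‖ ≤ ‖A‖ := by
  have h := l2_opNorm_mulVec A (EuclideanSpace.single j 1)
  rw [PiLp.norm_single, norm_one, mul_one] at h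
  refine le_trans (le_of_eq ?_) ((PiLp.norm_apply_le _ i).trans h)
  simp

theorem l2_opNorm_mul_mul_le [DecidableEq n] [DecidableEq l] [DecidableEq p]
    (A : Matrix m n 𝕜) (B : Matrix n l 𝕜) (C : Matrix l p 𝕜) :
    ‖A * B * C‖ ≤ ‖A‖ * ‖B‖ * ‖C‖ :=
  (l2_opNorm_mul _ _).trans (by gcongr; exact l2_opNorm_mul _ _)

theorem l2_opNorm_transpose [DecidableEq m] [DecidableEq n] (A : Matrix m n ℝ) :
    ‖Aᵀ‖ = ‖A‖ := by
  rw [← conjTranspose_eq_transpose_of_trivial, l2_opNorm_conjTranspose]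

theorem abs_apply_sub_apply_le_l2_opNorm [DecidableEq n] (A B : Matrix m n ℝ) (i : m) (j : n) :
    |A i j - B i j| ≤ ‖A - B‖ :=
  norm_apply_le_l2_opNorm (A - B) i j

theorem l2_opNorm_mul_mul_transpose_sub_le [DecidableEq m] [DecidableEq n] {R : ℝ}
    {X Y : Matrix m n ℝ} {W : Matrix n n ℝ} (hW : ‖W‖ ≤ R) (hX : ‖X‖ ≤ R) (hY : ‖Y‖ ≤ R) :
    ‖X * W * Xᵀ - Y * W * Yᵀ‖ ≤ 2 * R ^ 2 * ‖X - Y‖ := by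
  have hR : 0 ≤ R := (norm_nonneg X).trans hX
  have hsplit : X * W * Xᵀ - Y * W * Yᵀ = (X - Y) * W * Xᵀ + Y * W * (X - Y)ᵀ := by
    rw [transpose_sub, Matrix.sub_mul, Matrix.sub_mul, Matrix.mul_sub]
    abel
  calc ‖X * W * Xᵀ - Y * W * Yᵀ‖ ≤ ‖X - Y‖ * ‖W‖ * ‖Xᵀ‖ + ‖Y‖ * ‖W‖ * ‖(X - Y)ᵀ‖ := by
        rw [hsplit]
        exact (norm_add_le _ _).trans (add_le_add (l2_opNorm_mul_mul_le _ _ _)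
          (l2_opNorm_mul_mul_le _ _ _))
    _ ≤ ‖X - Y‖ * R * R + R * R * ‖X - Y‖ := by
        rw [l2_opNorm_transpose, l2_opNorm_transpose]
        gcongr
    _ = 2 * R ^ 2 * ‖X - Y‖ := by ring

end Matrix

namespace Real

-- Equivalently `tanh (t / 2) ≤ t / 2`.
theorem two_mul_exp_sub_one_le {t : ℝ} (ht : 0 ≤ t) : 2 * (exp t - 1) ≤ t * (exp t + 1) := by
  let g : ℝ → ℝ := fun t => t * (exp t + 1) - 2 * (exp t - 1)
  have hg : ∀ t, HasDerivAt g (1 - (1 - t) * exp t) t := fun t =>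
    (((hasDerivAt_id' t).mul ((hasDerivAt_exp t).add_const 1)).sub
      (((hasDerivAt_exp t).sub_const 1).const_mul 2)).congr_deriv (by ring)
  have hmono : Monotone g := by
    refine monotone_of_deriv_nonneg (fun t => (hg t).differentiableAt) fun t => ?_
    rw [(hg t).deriv, sub_nonneg]
    calc (1 - t) * exp t ≤ exp (-t) * exp t := by gcongr; exact one_sub_le_exp_neg t
      _ = 1 := by rw [← exp_add, neg_add_cancel, exp_zero]
  simpa [g] using hmono ht

theorem abs_exp_sub_exp_le (x y : ℝ) :
    |exp x - exp y| ≤ |x - y| * (exp x + exp y) / 2 := by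
  wlog hyx : y ≤ x generalizing x y
  · rw [abs_sub_comm, abs_sub_comm x, add_comm]
    exact this y x (le_of_not_ge hyx)
  have key := mul_le_mul_of_nonneg_left (two_mul_exp_sub_one_le (sub_nonneg.2 hyx))
    (exp_pos y).le
  rw [abs_of_nonneg (sub_nonneg.2 hyx), abs_of_nonneg (sub_nonneg.2 (exp_le_exp.2 hyx))]
  have hxy : exp y * exp (x - y) = exp x := by rw [← exp_add, add_sub_cancel]
  nlinarith

end Real

section Softmax

variable {ι : Type*} [Fintype ι]

noncomputable def softmax (a : ι → ℝ) (k : ι) : ℝ := exp (a k) / ∑ l, exp (a l)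

theorem sum_exp_pos [Nonempty ι] (a : ι → ℝ) : 0 < ∑ l, exp (a l) :=
  Finset.sum_pos (fun l _ => exp_pos (a l)) Finset.univ_nonempty

theorem softmax_nonneg (a : ι → ℝ) (k : ι) : 0 ≤ softmax a k := by
  unfold softmax; positivity

theorem sum_softmax [Nonempty ι] (a : ι → ℝ) : ∑ k, softmax a k = 1 := by
  simp only [softmax]
  rw [← Finset.sum_div, div_self (sum_exp_pos a).ne']

theorem sum_abs_softmax_sub_softmax_le [Nonempty ι] {a b : ι → ℝ} {δ : ℝ}
    (hab : ∀ k, |a k - b k| ≤ δ) : ∑ k, |softmax a k - softmax b k| ≤ 2 * δ := by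
  set S := ∑ l, exp (a l)
  set T := ∑ l, exp (b l)
  have hS : 0 < S := sum_exp_pos a
  have hT : 0 < T := sum_exp_pos b
  have hST : 0 < S * T := mul_pos hS hT
  set e : ι → ι → ℝ := fun k l => exp (a k) * exp (b l) + exp (b k) * exp (a l)
  have hpair : ∀ k l, |exp (a k) * exp (b l) - exp (b k) * exp (a l)| ≤ δ * e k l := by
    intro k l
    have hexp := abs_exp_sub_exp_le (a k + b l) (b k + a l)
    rw [exp_add, exp_add] at hexp
    have hdiff : |a k + b l - (b k + a l)| ≤ 2 * δ := by
      calc |a k + b l - (b k + a l)| = |(a k - b k) - (a l - b l)| := by ring_nf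
        _ ≤ |a k - b k| + |a l - b l| := abs_sub _ _
        _ ≤ 2 * δ := by linarith [hab k, hab l]
    calc _ ≤ _ := hexp
      _ ≤ 2 * δ * e k l / 2 := by gcongr
      _ = δ * e k l := by ring
  have hterm : ∀ k, |softmax a k - softmax b k| ≤ (∑ l, δ * e k l) / (S * T) := by
    intro k
    have hnum : softmax a k - softmax b k
        = (∑ l, (exp (a k) * exp (b l) - exp (b k) * exp (a l))) / (S * T) := by
      simp only [softmax]
      rw [div_sub_div _ _ hS.ne' hT.ne', Finset.sum_sub_distrib,
        ← Finset.mul_sum, ← Finset.mul_sum, mul_comm S]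
    rw [hnum, abs_div, abs_of_pos hST]
    gcongr
    exact (Finset.abs_sum_le_sum_abs _ _).trans (Finset.sum_le_sum fun l _ => hpair k l)
  have htotal : ∑ k, ∑ l, e k l = 2 * (S * T) := by
    simp only [e, Finset.sum_add_distrib, ← Finset.sum_mul_sum, S, T]
    ring
  calc ∑ k, |softmax a k - softmax b k| ≤ ∑ k, (∑ l, δ * e k l) / (S * T) :=
        Finset.sum_le_sum fun k _ => hterm k
    _ = 2 * δ := by
      simp only [← Finset.sum_div, ← Finset.mul_sum, htotal]
      field_simp

theorem abs_sum_mul_sub_sum_mul_le {p q c d : ι → ℝ} {C η : ℝ} (hq : ∀ k, 0 ≤ q k)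
    (hq_sum : ∑ k, q k = 1) (hc : ∀ k, |c k| ≤ C) (hcd : ∀ k, |c k - d k| ≤ η) :
    |∑ k, p k * c k - ∑ k, q k * d k| ≤ (∑ k, |p k - q k|) * C + η := by
  have hsplit : ∑ k, p k * c k - ∑ k, q k * d k
      = ∑ k, (p k - q k) * c k + ∑ k, q k * (c k - d k) := by
    simp only [← Finset.sum_sub_distrib, ← Finset.sum_add_distrib]
    exact Finset.sum_congr rfl fun k _ => by ring
  rw [hsplit]
  refine (abs_add_le _ _).trans (add_le_add ?_ ?_)
  · refine (Finset.abs_sum_le_sum_abs _ _).trans ?_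
    rw [Finset.sum_mul]
    refine Finset.sum_le_sum fun k _ => ?_
    rw [abs_mul]
    exact mul_le_mul_of_nonneg_left (hc k) (abs_nonneg _)
  · refine (Finset.abs_sum_le_sum_abs _ _).trans ?_
    calc ∑ k, |q k * (c k - d k)| ≤ ∑ k, q k * η := Finset.sum_le_sum fun k _ => by
          rw [abs_mul, abs_of_nonneg (hq k)]
          exact mul_le_mul_of_nonneg_left (hcd k) (hq k)
      _ = η := by rw [← Finset.sum_mul, hq_sum, one_mul]

end Softmax

theorem specNorm_eq_l2_opNorm {m n : ℕ} (A : Matrix (Fin m) (Fin n) ℝ) : specNorm A = ‖A‖ := rfl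

theorem attn_apply {N D : ℕ} (W WV : Matrix (Fin D) (Fin D) ℝ) (X : Matrix (Fin N) (Fin D) ℝ)
    (i : Fin N) (j : Fin D) :
    attn W WV X i j = ∑ k, softmax (fun l => (X * W * Xᵀ) i l) k * (X * WV) k j := by
  have hrow : ∀ r, (∑ l, exp ((X * W * Xᵀ) r l)) ≠ 0 := fun r =>
    have : Nonempty (Fin N) := ⟨r⟩
    (sum_exp_pos _).ne'
  have hinv : (Matrix.diagonal fun r => ∑ l, exp ((X * W * Xᵀ) r l))⁻¹
      = Matrix.diagonal fun r => (∑ l, exp ((X * W * Xᵀ) r l))⁻¹ := by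
    refine Matrix.inv_eq_left_inv ?_
    rw [Matrix.diagonal_mul_diagonal, ← Matrix.diagonal_one]
    exact congrArg Matrix.diagonal (funext fun r => inv_mul_cancel₀ (hrow r))
  rw [attn, hinv, Matrix.mul_apply]
  refine Finset.sum_congr rfl fun k _ => ?_
  simp [Matrix.diagonal_mul, softmax, div_eq_inv_mul]

theorem stmt_3_general (N D : ℕ) (R : ℝ) (hR : 1 < R)
    (W WV : Matrix (Fin D) (Fin D) ℝ) (X Xt : Matrix (Fin N) (Fin D) ℝ)
    (hW : specNorm W ≤ R) (hWV : specNorm WV ≤ R)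
    (hX : specNorm X ≤ R) (hXt : specNorm Xt ≤ R) :
    ∀ (i : Fin N) (j : Fin D),
      |attn W WV X i j - attn W WV Xt i j| ≤
        5 * R ^ 4 * Real.sqrt ((N : ℝ) * (D : ℝ)) * specNorm (X - Xt) := by
  intro i j
  have : Nonempty (Fin N) := ⟨i⟩
  simp only [specNorm_eq_l2_opNorm] at hW hWV hX hXt ⊢
  set ε := ‖X - Xt‖
  have hscore : ∀ k, |(X * W * Xᵀ) i k - (Xt * W * Xtᵀ) i k| ≤ 2 * R ^ 2 * ε := fun k =>
    (Matrix.abs_apply_sub_apply_le_l2_opNorm _ _ i k).trans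
      (Matrix.l2_opNorm_mul_mul_transpose_sub_le hW hX hXt)
  have hvalue : ∀ k, |(X * WV) k j| ≤ R ^ 2 := fun k =>
    (Matrix.norm_apply_le_l2_opNorm (X * WV) k j).trans <| (Matrix.l2_opNorm_mul X WV).trans <|
      (mul_le_mul hX hWV (norm_nonneg WV) (zero_le_one.trans hR.le)).trans_eq (sq R).symm
  have hvalue_sub : ∀ k, |(X * WV) k j - (Xt * WV) k j| ≤ ε * R := fun k =>
    (Matrix.abs_apply_sub_apply_le_l2_opNorm _ _ k j).trans <| by
      rw [← Matrix.sub_mul]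
      exact (Matrix.l2_opNorm_mul _ _).trans (by gcongr)
  rw [attn_apply, attn_apply]
  calc _ ≤ (∑ k, |softmax (fun l => (X * W * Xᵀ) i l) k - softmax (fun l => (Xt * W * Xtᵀ) i l) k|)
          * R ^ 2 + ε * R :=
        abs_sum_mul_sub_sum_mul_le (softmax_nonneg _) (sum_softmax _) hvalue hvalue_sub
    _ ≤ 2 * (2 * R ^ 2 * ε) * R ^ 2 + ε * R := by
        gcongr; exact sum_abs_softmax_sub_softmax_le hscore
    _ ≤ 5 * R ^ 4 * 1 * ε := by
        nlinarith [mul_le_mul_of_nonneg_right (le_self_pow₀ hR.le (show 4 ≠ 0 by norm_num))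
          (norm_nonneg (X - Xt))]
    _ ≤ 5 * R ^ 4 * √((N : ℝ) * D) * ε := by
        gcongr
        exact Real.one_le_sqrt.2 <| one_le_mul_of_one_le_of_one_le
          (Nat.one_le_cast.2 i.pos) (Nat.one_le_cast.2 j.pos)

/-- Entrywise Lipschitz bound for the self-attention module on a spectral-norm ball of radius R:
|F(X)ᵢⱼ − F(X̃)ᵢⱼ| ≤ 5 R⁴ √(N·D) · ‖X − X̃‖. -/
theorem stmt_3 (N D : ℕ) (hN : 1 ≤ N) (hD : 1 ≤ D) (R : ℝ) (hR : 1 < R)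
    (W WV : Matrix (Fin D) (Fin D) ℝ) (X Xt : Matrix (Fin N) (Fin D) ℝ)
    (hW : specNorm W ≤ R) (hWV : specNorm WV ≤ R)
    (hX : specNorm X ≤ R) (hXt : specNorm Xt ≤ R) :
    ∀ (i : Fin N) (j : Fin D),
      |attn W WV X i j - attn W WV Xt i j| ≤
        5 * R ^ 4 * Real.sqrt ((N : ℝ) * (D : ℝ)) * specNorm (X - Xt) :=
  stmt_3_general N D R hR W WV X Xt hW hWV hX hXt
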